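/- (Correctness of the fixed points of the distributed shooting algorithm.) In the dynamic game setup, fix a step size γ > 0. For a profile of control sequences (u₁,…,u_M), let xᵢ be the rollout of uᵢ, let λᵢ be robot i's backward costate sequence computed along the profile, and let Δuᵢᵗ = ∇_u cᵢ,t(xᵢᵗ, uᵢᵗ, x_{Nᵢ}ᵗ) + (D_u fᵢ,t(xᵢᵗ, uᵢᵗ))ᵀ λᵢ^{t+1}. Then the profile is a fixed point of the update uᵢ ← uᵢ − γ Δuᵢ for all i if and only if Δuᵢᵗ = 0 for all i and all t, i.e., the PMP-G stationarity condition holds for every robot; consequently, if moreover each robot's reduced objective Φᵢ (control sequence ↦ total cost against the neighbors' trajectories in the profile) is convex, then every such fixed point yields a Nash equilibrium of the game. -/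

import Mathlib

/-!
Part (1) holds because `γ ≠ 0`. For part (2), differentiate robot `i`'s rollout along a line
`u + s • d` of control sequences: the derivative is the linearized trajectory `δ`, and the
costate recursion telescopes `∑ₜ ⟪∇ₓ cₜ, δₜ⟫ + ⟪λ_T, δ_T⟫` into `∑ₜ ⟪(D_u fₜ)ᵀ λₜ₊₁, dₜ⟫`.
Hence the directional derivative of the reduced objective `Φᵢ` at `uᵢ` is `∑ₜ ⟪Δuᵢᵗ, dₜ⟫`,
which vanishes at a fixed point; a convex function of one real variable with zero derivative
at `0` is minimal there. Since rollouts are determined by the controls, `Φᵢ u` is the cost of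
any feasible trajectory driven by `u`.
-/

/-- A trajectory `(x, u)` is feasible for initial state `x0` and dynamics `f`
over horizon `T`. -/
def GameFeasible {X U : Type*} (T : ℕ) (x0 : X) (f : ℕ → X → U → X)
    (x : ℕ → X) (u : ℕ → U) : Prop :=
  x 0 = x0 ∧ ∀ t < T, x (t + 1) = f t (x t) (u t)

open Finset RealInnerProductSpace ContinuousLinearMap

theorem ConvexOn.le_of_hasDerivAt_add_smul_sub {E : Type*} [AddCommGroup E] [Module ℝ E]
    {Φ : E → ℝ} (hΦ : ConvexOn ℝ Set.univ Φ) {x y : E}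
    (hx : HasDerivAt (fun s : ℝ => Φ (x + s • (y - x))) 0 0) : Φ x ≤ Φ y := by
  have hline : ConvexOn ℝ Set.univ (fun s : ℝ => Φ (x + s • (y - x))) := by
    have := hΦ.comp_affineMap (AffineMap.lineMap x y)
    simpa [Function.comp_def, AffineMap.lineMap_apply, add_comm] using this
  have := hline.le_slope_of_hasDerivAt (Set.mem_univ 0) (Set.mem_univ 1) one_pos hx
  simpa [slope_def_field] using this

def trajectoryCost {X U : Type*} (T : ℕ) (c : ℕ → X → U → ℝ) (h : X → ℝ) (x : ℕ → X)
    (u : ℕ → U) : ℝ :=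
  ∑ t ∈ range T, c t (x t) (u t) + h (x T)

theorem rollout_eq_of_gameFeasible {X U : Type*} {T : ℕ} {x0 : X} {f : ℕ → X → U → X}
    {roll : (ℕ → U) → ℕ → X} (hroll0 : ∀ u, roll u 0 = x0)
    (hrollrec : ∀ u, ∀ t < T, roll u (t + 1) = f t (roll u t) (u t))
    {x : ℕ → X} {u : ℕ → U} (hx : GameFeasible T x0 f x u) : ∀ t ≤ T, roll u t = x t
  | 0, _ => (hroll0 u).trans hx.1.symm
  | t + 1, ht => by
    rw [hrollrec u t ht, hx.2 t ht,
      rollout_eq_of_gameFeasible hroll0 hrollrec hx t (Nat.le_of_succ_le ht)]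

theorem trajectoryCost_rollout_eq_of_gameFeasible {X U : Type*} {T : ℕ} {x0 : X}
    {f : ℕ → X → U → X} {c : ℕ → X → U → ℝ} {h : X → ℝ} {roll : (ℕ → U) → ℕ → X}
    (hroll0 : ∀ u, roll u 0 = x0) (hrollrec : ∀ u, ∀ t < T, roll u (t + 1) = f t (roll u t) (u t))
    {x : ℕ → X} {u : ℕ → U} (hx : GameFeasible T x0 f x u) :
    trajectoryCost T c h (roll u) u = trajectoryCost T c h x u := by
  have hroll := rollout_eq_of_gameFeasible hroll0 hrollrec hx
  rw [trajectoryCost, sum_congr rfl fun t ht => by rw [hroll t (mem_range.1 ht).le], hroll T le_rfl,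
    trajectoryCost]

section Linearization

variable {E F G : Type*} [NormedAddCommGroup E] [NormedSpace ℝ E]
  [NormedAddCommGroup F] [NormedSpace ℝ F] [NormedAddCommGroup G] [NormedSpace ℝ G]

theorem HasFDerivAt.fderiv_partial_left {k : E → F → G} {L : E × F →L[ℝ] G} {a : E} {b : F}
    (hk : HasFDerivAt (fun p : E × F => k p.1 p.2) L (a, b)) :
    fderiv ℝ (fun y => k y b) a = L ∘L inl ℝ E F :=
  (hk.comp a (hasFDerivAt_prodMk_left (𝕜 := ℝ) a b) :).fderiv

theorem HasFDerivAt.fderiv_partial_right {k : E → F → G} {L : E × F →L[ℝ] G} {a : E} {b : F}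
    (hk : HasFDerivAt (fun p : E × F => k p.1 p.2) L (a, b)) :
    fderiv ℝ (fun v => k a v) b = L ∘L inr ℝ E F :=
  (hk.comp b (hasFDerivAt_prodMk_right (𝕜 := ℝ) a b) :).fderiv

theorem hasDerivAt_add_smul_apply (u d : ℕ → F) (t : ℕ) :
    HasDerivAt (fun s : ℝ => (u + s • d) t) (d t) 0 := by
  simpa using ((hasDerivAt_id (0 : ℝ)).smul_const (d t)).const_add (u t)

def tangentRollout (L : ℕ → E × F →L[ℝ] E) (d : ℕ → F) : ℕ → E
  | 0 => 0
  | t + 1 => L t (tangentRollout L d t, d t)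

theorem hasDerivAt_rollout_add_smul {T : ℕ} {x0 : E} {f : ℕ → E → F → E}
    {roll : (ℕ → F) → ℕ → E} (hroll0 : ∀ u, roll u 0 = x0)
    (hrollrec : ∀ u, ∀ t < T, roll u (t + 1) = f t (roll u t) (u t))
    {u d : ℕ → F} {L : ℕ → E × F →L[ℝ] E}
    (hL : ∀ t < T, HasFDerivAt (fun p : E × F => f t p.1 p.2) (L t) (roll u t, u t)) :
    ∀ t ≤ T, HasDerivAt (fun s : ℝ => roll (u + s • d) t) (tangentRollout L d t) 0
  | 0, _ => by
    show HasDerivAt _ 0 0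
    simpa only [hroll0] using hasDerivAt_const (0 : ℝ) x0
  | t + 1, ht => by
    have hcurve :=
      (hasDerivAt_rollout_add_smul (d := d) hroll0 hrollrec hL t (Nat.le_of_succ_le ht)).prodMk
        (hasDerivAt_add_smul_apply u d t)
    have := (hL t ht).comp_hasDerivAt_of_eq 0 hcurve (by simp)
    simp only [hrollrec _ t ht]
    exact this

end Linearization

section Costate

variable {E F : Type*} [NormedAddCommGroup E] [InnerProductSpace ℝ E] [CompleteSpace E]
  [NormedAddCommGroup F] [InnerProductSpace ℝ F] [CompleteSpace F]

theorem sum_inner_tangentRollout_add_inner_costate {T : ℕ} (L : ℕ → E × F →L[ℝ] E) (d : ℕ → F)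
    (a lam : ℕ → E)
    (hlam : ∀ t, 1 ≤ t → t < T → lam t = a t + adjoint (L t ∘L inl ℝ E F) (lam (t + 1))) :
    ∑ t ∈ range T, ⟪a t, tangentRollout L d t⟫ + ⟪lam T, tangentRollout L d T⟫
      = ∑ t ∈ range T, ⟪adjoint (L t ∘L inr ℝ E F) (lam (t + 1)), d t⟫ := by
  set δ := tangentRollout L d
  have step : ∀ t ∈ range T, ⟪lam (t + 1), δ (t + 1)⟫ - ⟪lam t, δ t⟫
      = ⟪adjoint (L t ∘L inr ℝ E F) (lam (t + 1)), d t⟫ - ⟪a t, δ t⟫ := by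
    intro t ht
    have hδ : δ (t + 1) = (L t ∘L inl ℝ E F) (δ t) + (L t ∘L inr ℝ E F) (d t) := by
      simp [δ, tangentRollout, ← map_add]
    -- `δ 0 = 0`, so the costate equation is only needed from `t = 1` on
    have hcostate :
        ⟪lam t, δ t⟫ = ⟪a t, δ t⟫ + ⟪adjoint (L t ∘L inl ℝ E F) (lam (t + 1)), δ t⟫ := by
      rcases t with _ | t
      · simp [δ, tangentRollout]
      · rw [hlam (t + 1) (by omega) (mem_range.1 ht), inner_add_left]
    rw [hδ, inner_add_right, ← adjoint_inner_left, ← adjoint_inner_left, hcostate]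
    ring
  have tele := sum_range_sub (fun t => ⟪lam t, δ t⟫) T
  rw [sum_congr rfl step, sum_sub_distrib] at tele
  simp only [δ, tangentRollout, inner_zero_right, sub_zero] at tele
  linarith

variable {T : ℕ} {x0 : E} {f : ℕ → E → F → E} {c : ℕ → E → F → ℝ} {h : E → ℝ}
  {roll : (ℕ → F) → ℕ → E} {us : ℕ → F} {xs : ℕ → E} {lam : ℕ → E}

theorem hasDerivAt_trajectoryCost_rollout_add_smul (hroll0 : ∀ u, roll u 0 = x0)
    (hrollrec : ∀ u, ∀ t < T, roll u (t + 1) = f t (roll u t) (u t))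
    (hxs : GameFeasible T x0 f xs us)
    (hf : ∀ t < T, DifferentiableAt ℝ (fun p : E × F => f t p.1 p.2) (xs t, us t))
    (hc : ∀ t < T, DifferentiableAt ℝ (fun p : E × F => c t p.1 p.2) (xs t, us t))
    (hh : DifferentiableAt ℝ h (xs T))
    (hlamT : lam T = gradient h (xs T))
    (hlamrec : ∀ t, 1 ≤ t → t < T → lam t = gradient (fun y => c t y (us t)) (xs t)
      + adjoint (fderiv ℝ (fun y => f t y (us t)) (xs t)) (lam (t + 1)))
    (d : ℕ → F) :
    HasDerivAt (fun s : ℝ => trajectoryCost T c h (roll (us + s • d)) (us + s • d))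
      (∑ t ∈ range T, ⟪gradient (fun v => c t (xs t) v) (us t)
        + adjoint (fderiv ℝ (fun v => f t (xs t) v) (us t)) (lam (t + 1)), d t⟫) 0 := by
  unfold trajectoryCost
  have hroll := rollout_eq_of_gameFeasible hroll0 hrollrec hxs
  set Lf := fun t => fderiv ℝ (fun p : E × F => f t p.1 p.2) (xs t, us t)
  set Lc := fun t => fderiv ℝ (fun p : E × F => c t p.1 p.2) (xs t, us t)
  set δ := tangentRollout Lf d
  have hδ : ∀ t ≤ T, HasDerivAt (fun s : ℝ => roll (us + s • d) t) (δ t) 0 :=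
    hasDerivAt_rollout_add_smul hroll0 hrollrec fun t ht => by
      rw [hroll t ht.le]; exact (hf t ht).hasFDerivAt
  have hcost : HasDerivAt (fun s : ℝ => ∑ t ∈ range T, c t (roll (us + s • d) t) ((us + s • d) t)
        + h (roll (us + s • d) T))
      (∑ t ∈ range T, Lc t (δ t, d t) + fderiv ℝ h (xs T) (δ T)) 0 := by
    refine .add (.fun_sum fun t ht => ?_) ?_
    · have ht := mem_range.1 ht
      exact (hc t ht).hasFDerivAt.comp_hasDerivAt_of_eq 0
        ((hδ t ht.le).prodMk (hasDerivAt_add_smul_apply us d t)) (by simp [hroll t ht.le])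
    · exact hh.hasFDerivAt.comp_hasDerivAt_of_eq 0 (hδ T le_rfl) (by simp [hroll T le_rfl])
  convert hcost using 1
  have hadj := sum_inner_tangentRollout_add_inner_costate Lf d
    (fun t => gradient (fun y => c t y (us t)) (xs t)) lam fun t h1 ht => by
      rw [hlamrec t h1 ht, (hf t ht).hasFDerivAt.fderiv_partial_left]
  have hsplit : ∀ t ∈ range T, Lc t (δ t, d t) = ⟪gradient (fun y => c t y (us t)) (xs t), δ t⟫
      + ⟪gradient (fun v => c t (xs t) v) (us t), d t⟫ := by
    intro t ht
    have hct := (hc t (mem_range.1 ht)).hasFDerivAt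
    rw [inner_gradient_left, inner_gradient_left, hct.fderiv_partial_left,
      hct.fderiv_partial_right]
    simp only [comp_apply, inl_apply, inr_apply, ← map_add, Prod.mk_add_mk, add_zero, zero_add,
      Lc]
  rw [sum_congr rfl hsplit, sum_add_distrib, inner_gradient_left.symm, ← hlamT, add_right_comm,
    hadj, ← sum_add_distrib]
  refine sum_congr rfl fun t ht => ?_
  rw [inner_add_left, (hf t (mem_range.1 ht)).hasFDerivAt.fderiv_partial_right, add_comm]

theorem trajectoryCost_le_of_stationary (hroll0 : ∀ u, roll u 0 = x0)
    (hrollrec : ∀ u, ∀ t < T, roll u (t + 1) = f t (roll u t) (u t))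
    (hxs : GameFeasible T x0 f xs us)
    (hf : ∀ t < T, DifferentiableAt ℝ (fun p : E × F => f t p.1 p.2) (xs t, us t))
    (hc : ∀ t < T, DifferentiableAt ℝ (fun p : E × F => c t p.1 p.2) (xs t, us t))
    (hh : DifferentiableAt ℝ h (xs T))
    (hlamT : lam T = gradient h (xs T))
    (hlamrec : ∀ t, 1 ≤ t → t < T → lam t = gradient (fun y => c t y (us t)) (xs t)
      + adjoint (fderiv ℝ (fun y => f t y (us t)) (xs t)) (lam (t + 1)))
    (hstat : ∀ t < T, gradient (fun v => c t (xs t) v) (us t)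
      + adjoint (fderiv ℝ (fun v => f t (xs t) v) (us t)) (lam (t + 1)) = 0)
    (hconv : ConvexOn ℝ Set.univ fun u => trajectoryCost T c h (roll u) u)
    {x : ℕ → E} {u : ℕ → F} (hx : GameFeasible T x0 f x u) :
    trajectoryCost T c h xs us ≤ trajectoryCost T c h x u := by
  have hderiv := hasDerivAt_trajectoryCost_rollout_add_smul hroll0 hrollrec hxs hf hc hh hlamT
    hlamrec (u - us)
  rw [sum_eq_zero fun t ht => by rw [hstat t (mem_range.1 ht), inner_zero_left]] at hderiv
  rw [← trajectoryCost_rollout_eq_of_gameFeasible hroll0 hrollrec hxs,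
    ← trajectoryCost_rollout_eq_of_gameFeasible hroll0 hrollrec hx]
  exact hconv.le_of_hasDerivAt_add_smul_sub hderiv

end Costate
theorem shooting_fixed_point_iff_stationary_and_nash_general
    (M T : ℕ) (γ : ℝ) (hγ : 0 < γ)
    (n mdim : Fin M → ℕ)
    (x0 : (i : Fin M) → EuclideanSpace ℝ (Fin (n i)))
    (N : Fin M → Finset (Fin M))
    (f : (i : Fin M) → ℕ → EuclideanSpace ℝ (Fin (n i)) →
      EuclideanSpace ℝ (Fin (mdim i)) → EuclideanSpace ℝ (Fin (n i)))
    (c : (i : Fin M) → ℕ → EuclideanSpace ℝ (Fin (n i)) →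
      EuclideanSpace ℝ (Fin (mdim i)) →
      ((j : N i) → EuclideanSpace ℝ (Fin (n j.1))) → ℝ)
    (h : (i : Fin M) → EuclideanSpace ℝ (Fin (n i)) →
      ((j : N i) → EuclideanSpace ℝ (Fin (n j.1))) → ℝ)
    -- continuous differentiability of the data
    (hf : ∀ i, ∀ t < T, ContDiff ℝ 1
      (fun p : EuclideanSpace ℝ (Fin (n i)) × EuclideanSpace ℝ (Fin (mdim i)) =>
        f i t p.1 p.2))
    (hc : ∀ i, ∀ t < T, ContDiff ℝ 1
      (fun p : EuclideanSpace ℝ (Fin (n i)) × EuclideanSpace ℝ (Fin (mdim i)) ×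
          ((j : N i) → EuclideanSpace ℝ (Fin (n j.1))) =>
        c i t p.1 p.2.1 p.2.2))
    (hh : ∀ i, ContDiff ℝ 1
      (fun p : EuclideanSpace ℝ (Fin (n i)) ×
          ((j : N i) → EuclideanSpace ℝ (Fin (n j.1))) =>
        h i p.1 p.2))
    -- the current profile of control sequences and its rollouts xᵢ
    (us : (i : Fin M) → ℕ → EuclideanSpace ℝ (Fin (mdim i)))
    (xs : (i : Fin M) → ℕ → EuclideanSpace ℝ (Fin (n i)))
    (hxs : ∀ i, GameFeasible T (x0 i) (f i) (xs i) (us i))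
    -- the backward costate sequence λᵢ computed along the profile
    (lam : (i : Fin M) → ℕ → EuclideanSpace ℝ (Fin (n i)))
    (hlamT : ∀ i, lam i T = gradient (fun y => h i y (fun j => xs j.1 T)) (xs i T))
    (hlamrec : ∀ i, ∀ t, 1 ≤ t → t < T →
      lam i t = gradient (fun y => c i t y (us i t) (fun j => xs j.1 t)) (xs i t)
        + (ContinuousLinearMap.adjoint
            (fderiv ℝ (fun y => f i t y (us i t)) (xs i t))) (lam i (t + 1)))
    -- the correction terms Δuᵢᵗ of the shooting algorithm
    (Δu : (i : Fin M) → ℕ → EuclideanSpace ℝ (Fin (mdim i)))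
    (hΔu : ∀ i, ∀ t < T,
      Δu i t = gradient (fun v => c i t (xs i t) v (fun j => xs j.1 t)) (us i t)
        + (ContinuousLinearMap.adjoint
            (fderiv ℝ (fun v => f i t (xs i t) v) (us i t))) (lam i (t + 1)))
    -- the rollout map and the reduced objectives Φᵢ against the profile
    (roll : (i : Fin M) → (ℕ → EuclideanSpace ℝ (Fin (mdim i))) → ℕ →
      EuclideanSpace ℝ (Fin (n i)))
    (hroll0 : ∀ i u, roll i u 0 = x0 i)
    (hrollrec : ∀ i u, ∀ t < T, roll i u (t + 1) = f i t (roll i u t) (u t))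
    (Φ : (i : Fin M) → (ℕ → EuclideanSpace ℝ (Fin (mdim i))) → ℝ)
    (hΦ : ∀ i u, Φ i u =
      (∑ t ∈ Finset.range T, c i t (roll i u t) (u t) (fun j => xs j.1 t))
        + h i (roll i u T) (fun j => xs j.1 T)) :
    -- (1) fixed point of the update uᵢ ← uᵢ − γ Δuᵢ iff PMP-G stationarity
    ((∀ i, ∀ t < T, us i t - γ • Δu i t = us i t) ↔ (∀ i, ∀ t < T, Δu i t = 0)) ∧
    -- (2) if moreover each Φᵢ is convex, a fixed point yields a Nash equilibrium
    ((∀ i, ConvexOn ℝ Set.univ (Φ i)) →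
      (∀ i, ∀ t < T, us i t - γ • Δu i t = us i t) →
      ∀ i, ∀ (x : ℕ → EuclideanSpace ℝ (Fin (n i)))
          (u : ℕ → EuclideanSpace ℝ (Fin (mdim i))),
        GameFeasible T (x0 i) (f i) x u →
          (∑ t ∈ Finset.range T, c i t (xs i t) (us i t) (fun j => xs j.1 t))
              + h i (xs i T) (fun j => xs j.1 T)
            ≤ (∑ t ∈ Finset.range T, c i t (x t) (u t) (fun j => xs j.1 t))
              + h i (x T) (fun j => xs j.1 T)) := by
  have hfixed : (∀ i, ∀ t < T, us i t - γ • Δu i t = us i t) ↔ ∀ i, ∀ t < T, Δu i t = 0 := by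
    simp only [sub_eq_self, smul_eq_zero, hγ.ne', false_or]
  refine ⟨hfixed, fun hconv hfix i x u hx => ?_⟩
  have hci : ∀ t < T, ContDiff ℝ 1 fun p : EuclideanSpace ℝ (Fin (n i)) ×
      EuclideanSpace ℝ (Fin (mdim i)) => c i t p.1 p.2 fun j => xs j.1 t := fun t ht =>
    (hc i t ht).comp (contDiff_fst.prodMk (contDiff_snd.prodMk contDiff_const))
  have hhi : ContDiff ℝ 1 fun y => h i y fun j => xs j.1 T :=
    (hh i).comp (contDiff_id.prodMk contDiff_const)
  refine trajectoryCost_le_of_stationary (c := fun t y v => c i t y v fun j => xs j.1 t)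
    (hroll0 i) (hrollrec i) (hxs i)
    (fun t ht => (hf i t ht).differentiable one_ne_zero _)
    (fun t ht => (hci t ht).differentiable one_ne_zero _) (hhi.differentiable one_ne_zero _)
    (hlamT i) (hlamrec i) (fun t ht => (hΔu i t ht).symm.trans (hfixed.1 hfix i t ht)) ?_ hx
  simpa only [funext (hΦ i), trajectoryCost] using hconv i

theorem shooting_fixed_point_iff_stationary_and_nash
    (M T : ℕ) (hM : 1 ≤ M) (hT : 1 ≤ T) (γ : ℝ) (hγ : 0 < γ)
    (n mdim : Fin M → ℕ)
    (x0 : (i : Fin M) → EuclideanSpace ℝ (Fin (n i)))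
    (N : Fin M → Finset (Fin M))
    (f : (i : Fin M) → ℕ → EuclideanSpace ℝ (Fin (n i)) →
      EuclideanSpace ℝ (Fin (mdim i)) → EuclideanSpace ℝ (Fin (n i)))
    (c : (i : Fin M) → ℕ → EuclideanSpace ℝ (Fin (n i)) →
      EuclideanSpace ℝ (Fin (mdim i)) →
      ((j : N i) → EuclideanSpace ℝ (Fin (n j.1))) → ℝ)
    (h : (i : Fin M) → EuclideanSpace ℝ (Fin (n i)) →
      ((j : N i) → EuclideanSpace ℝ (Fin (n j.1))) → ℝ)
    -- continuous differentiability of the data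
    (hf : ∀ i, ∀ t < T, ContDiff ℝ 1
      (fun p : EuclideanSpace ℝ (Fin (n i)) × EuclideanSpace ℝ (Fin (mdim i)) =>
        f i t p.1 p.2))
    (hc : ∀ i, ∀ t < T, ContDiff ℝ 1
      (fun p : EuclideanSpace ℝ (Fin (n i)) × EuclideanSpace ℝ (Fin (mdim i)) ×
          ((j : N i) → EuclideanSpace ℝ (Fin (n j.1))) =>
        c i t p.1 p.2.1 p.2.2))
    (hh : ∀ i, ContDiff ℝ 1
      (fun p : EuclideanSpace ℝ (Fin (n i)) ×
          ((j : N i) → EuclideanSpace ℝ (Fin (n j.1))) =>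
        h i p.1 p.2))
    -- the current profile of control sequences and its rollouts xᵢ
    (us : (i : Fin M) → ℕ → EuclideanSpace ℝ (Fin (mdim i)))
    (xs : (i : Fin M) → ℕ → EuclideanSpace ℝ (Fin (n i)))
    (hxs : ∀ i, GameFeasible T (x0 i) (f i) (xs i) (us i))
    -- the backward costate sequence λᵢ computed along the profile
    (lam : (i : Fin M) → ℕ → EuclideanSpace ℝ (Fin (n i)))
    (hlamT : ∀ i, lam i T = gradient (fun y => h i y (fun j => xs j.1 T)) (xs i T))
    (hlamrec : ∀ i, ∀ t, 1 ≤ t → t < T →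
      lam i t = gradient (fun y => c i t y (us i t) (fun j => xs j.1 t)) (xs i t)
        + (ContinuousLinearMap.adjoint
            (fderiv ℝ (fun y => f i t y (us i t)) (xs i t))) (lam i (t + 1)))
    -- the correction terms Δuᵢᵗ of the shooting algorithm
    (Δu : (i : Fin M) → ℕ → EuclideanSpace ℝ (Fin (mdim i)))
    (hΔu : ∀ i, ∀ t < T,
      Δu i t = gradient (fun v => c i t (xs i t) v (fun j => xs j.1 t)) (us i t)
        + (ContinuousLinearMap.adjoint
            (fderiv ℝ (fun v => f i t (xs i t) v) (us i t))) (lam i (t + 1)))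
    -- the rollout map and the reduced objectives Φᵢ against the profile
    (roll : (i : Fin M) → (ℕ → EuclideanSpace ℝ (Fin (mdim i))) → ℕ →
      EuclideanSpace ℝ (Fin (n i)))
    (hroll0 : ∀ i u, roll i u 0 = x0 i)
    (hrollrec : ∀ i u, ∀ t < T, roll i u (t + 1) = f i t (roll i u t) (u t))
    (Φ : (i : Fin M) → (ℕ → EuclideanSpace ℝ (Fin (mdim i))) → ℝ)
    (hΦ : ∀ i u, Φ i u =
      (∑ t ∈ Finset.range T, c i t (roll i u t) (u t) (fun j => xs j.1 t))
        + h i (roll i u T) (fun j => xs j.1 T)) :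
    -- (1) fixed point of the update uᵢ ← uᵢ − γ Δuᵢ iff PMP-G stationarity
    ((∀ i, ∀ t < T, us i t - γ • Δu i t = us i t) ↔ (∀ i, ∀ t < T, Δu i t = 0)) ∧
    -- (2) if moreover each Φᵢ is convex, a fixed point yields a Nash equilibrium
    ((∀ i, ConvexOn ℝ Set.univ (Φ i)) →
      (∀ i, ∀ t < T, us i t - γ • Δu i t = us i t) →
      ∀ i, ∀ (x : ℕ → EuclideanSpace ℝ (Fin (n i)))
          (u : ℕ → EuclideanSpace ℝ (Fin (mdim i))),
        GameFeasible T (x0 i) (f i) x u →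
          (∑ t ∈ Finset.range T, c i t (xs i t) (us i t) (fun j => xs j.1 t))
              + h i (xs i T) (fun j => xs j.1 T)
            ≤ (∑ t ∈ Finset.range T, c i t (x t) (u t) (fun j => xs j.1 t))
              + h i (x T) (fun j => xs j.1 T)) :=
  shooting_fixed_point_iff_stationary_and_nash_general M T γ hγ n mdim x0 N f c h hf hc hh us xs hxs
    lam hlamT hlamrec Δu hΔu roll hroll0 hrollrec Φ hΦ
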